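/- Let G be a strongly regular graph with parameters (n, k, 1, 2). Then every pair of distinct non-adjacent vertices of G lies in exactly one induced 4-cycle (as an antipodal pair), and hence the number of induced 4-cycles equals n*(n-k-1)/4. -/

import Mathlib

/-- The number of `m`-element vertex subsets of `G` inducing a cycle of length `m`. -/
noncomputable def inducedCycleCount {V : Type*} [Fintype V] (G : SimpleGraph V) (m : ℕ) : ℕ :=
  Set.ncard {s : Finset V | s.card = m ∧
    Nonempty (G.induce (↑s : Set V) ≃g SimpleGraph.cycleGraph m)}

/-!
If `u ≠ v` are non-adjacent in an `srg(n, k, 1, 2)`, their two common neighbours `w, w'` are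
non-adjacent, for otherwise the edge `ww'` would have the two common neighbours `u, v`, against
`λ = 1`; so `u w v w'` is an induced 4-cycle. In any induced 4-cycle through the antipodal pair
`u, v` the two other vertices are common neighbours of `u` and `v`, so this cycle is the only one.
An induced 4-cycle contains exactly 4 ordered non-adjacent pairs of vertices and `G` has
`n (n - k - 1)` of them, so double counting gives `4 · #cycles = n (n - k - 1)`.
-/

open Finset

namespace SimpleGraph

variable {V W : Type*} {G : SimpleGraph V}

theorem card_eq_of_induce_iso [Fintype W] {H : SimpleGraph W} {s : Finset V}
    (e : G.induce (s : Set V) ≃g H) : #s = Fintype.card W := by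
  rw [← Fintype.card_coe s, ← Fintype.card_congr e.toEquiv]
  rfl

theorem card_filter_compl_adj_of_induce_iso [Fintype V] [DecidableEq V] [DecidableRel G.Adj]
    [Fintype W] [DecidableEq W] {H : SimpleGraph W} [DecidableRel H.Adj] {s : Finset V}
    (e : G.induce (s : Set V) ≃g H) :
    #{p : V × V | Gᶜ.Adj p.1 p.2 ∧ p.1 ∈ s ∧ p.2 ∈ s} = #{p : W × W | Hᶜ.Adj p.1 p.2} := by
  have hadj : ∀ x y : (s : Set V), Hᶜ.Adj (e x) (e y) ↔ Gᶜ.Adj x y := fun x y => by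
    simp only [compl_adj, Ne, e.injective.eq_iff, e.map_adj_iff, Subtype.ext_iff]
    rfl
  refine card_bij'
    (fun p hp => (e ⟨p.1, (mem_filter.1 hp).2.2.1⟩, e ⟨p.2, (mem_filter.1 hp).2.2.2⟩))
    (fun q _ => ((e.symm q.1 : V), (e.symm q.2 : V))) ?_ ?_ (by simp) (by simp)
  · intro p hp
    simp only [mem_filter, mem_univ, true_and] at hp ⊢
    exact (hadj _ _).mpr hp.1
  · intro q hq
    simp only [mem_filter, mem_univ, true_and] at hq ⊢
    refine ⟨(hadj (e.symm q.1) (e.symm q.2)).mp ?_, (e.symm q.1).2, (e.symm q.2).2⟩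
    simpa using hq

theorem mem_commonNeighbors_of_induce_iso_cycleGraph_four {s : Finset V}
    (e : G.induce (s : Set V) ≃g cycleGraph 4) {u v w : V} (hu : u ∈ s) (hv : v ∈ s)
    (hw : w ∈ s) (huv : u ≠ v) (hna : ¬G.Adj u v) (hwu : w ≠ u) (hwv : w ≠ v) :
    w ∈ G.commonNeighbors u v := by
  have cycle_four : ∀ a b c : Fin 4, a ≠ b → c ≠ a → c ≠ b → ¬(cycleGraph 4).Adj a b →
      (cycleGraph 4).Adj a c ∧ (cycleGraph 4).Adj b c := by decide
  obtain ⟨huw, hvw⟩ := cycle_four (e ⟨u, hu⟩) (e ⟨v, hv⟩) (e ⟨w, hw⟩)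
    (e.injective.ne (by simpa using huv)) (e.injective.ne (by simpa using hwu))
    (e.injective.ne (by simpa using hwv)) (e.map_adj_iff.not.mpr hna)
  exact ⟨e.map_adj_iff.mp huw, e.map_adj_iff.mp hvw⟩

theorem nonempty_induce_iso_cycleGraph_four [DecidableEq V] {a b c d : V}
    (hab : G.Adj a b) (hbc : G.Adj b c) (hcd : G.Adj c d) (hda : G.Adj d a)
    (hac : ¬G.Adj a c) (hbd : ¬G.Adj b d) (hac' : a ≠ c) (hbd' : b ≠ d) :
    Nonempty (G.induce ({a, b, c, d} : Finset V) ≃g cycleGraph 4) := by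
  have hca : ¬G.Adj c a := fun h => hac h.symm
  have hdb : ¬G.Adj d b := fun h => hbd h.symm
  have hinj : Function.Injective ![a, b, c, d] := by
    intro i j hij
    fin_cases i <;> fin_cases j <;>
      simp_all [hab.ne, hbc.ne, hcd.ne, hda.ne, hab.ne.symm, hbc.ne.symm, hcd.ne.symm,
        hda.ne.symm, hac'.symm, hbd'.symm]
  let f : cycleGraph 4 ↪g G :=
    ⟨⟨![a, b, c, d], hinj⟩, fun {i j} => by
      fin_cases i <;> fin_cases j <;>
        simp [hab, hbc, hcd, hda, hab.symm, hbc.symm, hcd.symm, hda.symm, hac, hbd, hca, hdb] <;>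
        decide⟩
  have hrange : Set.range f = (({a, b, c, d} : Finset V) : Set V) := by
    ext x; simp [f]; tauto
  exact ⟨hrange ▸ (Embedding.isoInduceRange f).symm⟩

variable [Fintype V] [DecidableRel G.Adj] {n k μ : ℕ}

theorem IsSRGWith.not_adj_of_mem_commonNeighbors (h : G.IsSRGWith n k 1 μ) {u v w w' : V}
    (huv : u ≠ v) (hw : w ∈ G.commonNeighbors u v) (hw' : w' ∈ G.commonNeighbors u v) :
    ¬G.Adj w w' := by
  rw [mem_commonNeighbors] at hw hw'
  intro hadj
  have := Fintype.card_le_one_iff.mp (h.of_adj w w' hadj).le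
    ⟨u, (mem_commonNeighbors ..).mpr ⟨hw.1.symm, hw'.1.symm⟩⟩
    ⟨v, (mem_commonNeighbors ..).mpr ⟨hw.2.symm, hw'.2.symm⟩⟩
  exact huv (congrArg Subtype.val this)

theorem IsSRGWith.setOf_induce_iso_cycleGraph_four_mem_eq [DecidableEq V]
    (h : G.IsSRGWith n k 1 2) {u v : V} (huv : u ≠ v) (hna : ¬G.Adj u v) :
    {s : Finset V | s.card = 4 ∧ Nonempty (G.induce (s : Set V) ≃g cycleGraph 4) ∧
      u ∈ s ∧ v ∈ s} = {insert u (insert v (G.commonNeighbors u v).toFinset)} := by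
  have hcard : #(G.commonNeighbors u v).toFinset = 2 := by
    rw [Set.toFinset_card]; exact h.of_not_adj huv hna
  obtain ⟨w, w', hww', hW⟩ := card_eq_two.mp hcard
  have hw : w ∈ G.commonNeighbors u v := by simp [← Set.mem_toFinset, hW]
  have hw' : w' ∈ G.commonNeighbors u v := by simp [← Set.mem_toFinset, hW]
  have hnadj : ¬G.Adj w w' := h.not_adj_of_mem_commonNeighbors huv hw hw'
  rw [mem_commonNeighbors] at hw hw'
  obtain ⟨e₀⟩ : Nonempty (G.induce ↑({u, v, w, w'} : Finset V) ≃g cycleGraph 4) := by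
    rw [insert_comm v]
    exact nonempty_induce_iso_cycleGraph_four hw.1 hw.2.symm hw'.2 hw'.1.symm hna hnadj huv hww'
  rw [hW]
  refine Set.eq_singleton_iff_unique_mem.mpr
    ⟨⟨card_eq_of_induce_iso e₀, ⟨e₀⟩, by simp, by simp⟩, ?_⟩
  rintro s ⟨hs, ⟨e⟩, hus, hvs⟩
  refine eq_of_subset_of_card_le (fun x hx => ?_) (by rw [hs, card_eq_of_induce_iso e₀]; rfl)
  rcases eq_or_ne x u with rfl | hxu
  · simp
  rcases eq_or_ne x v with rfl | hxv
  · simp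
  have hx := mem_commonNeighbors_of_induce_iso_cycleGraph_four e hus hvs hx huv hna hxu hxv
  rw [← Set.mem_toFinset, hW] at hx
  exact mem_insert_of_mem (mem_insert_of_mem hx)

theorem IsRegularOfDegree.card_filter_adj {d : ℕ} (h : G.IsRegularOfDegree d) :
    #{p : V × V | G.Adj p.1 p.2} = Fintype.card V * d := by
  rw [← two_mul_card_edgeFinset, ← sum_degrees_eq_twice_card_edges]
  simp [h.degree_eq]

theorem four_mul_inducedCycleCount_eq [DecidableEq V]
    (hG : ∀ u v : V, u ≠ v → ¬G.Adj u v →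
      {s : Finset V | s.card = 4 ∧ Nonempty (G.induce (s : Set V) ≃g cycleGraph 4) ∧
        u ∈ s ∧ v ∈ s}.ncard = 1) :
    4 * inducedCycleCount G 4 = #{p : V × V | Gᶜ.Adj p.1 p.2} := by
  classical
  set C := {s : Finset V | s.card = 4 ∧ Nonempty (G.induce (s : Set V) ≃g cycleGraph 4)}.toFinset
  have hcount := card_mul_eq_card_mul (s := {p : V × V | Gᶜ.Adj p.1 p.2}) (t := C)
    (fun p s => p.1 ∈ s ∧ p.2 ∈ s) (m := 1) (n := 4) ?_ ?_
  · rw [inducedCycleCount, Set.ncard_eq_toFinset_card', mul_comm]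
    exact hcount.symm.trans (mul_one _)
  · intro p hp
    rw [mem_filter, compl_adj] at hp
    rw [← hG p.1 p.2 hp.2.1 hp.2.2, ← Set.ncard_coe_finset]
    congr 1
    ext s
    simp [bipartiteAbove, C, and_assoc]
  · intro s hs
    obtain ⟨-, ⟨e⟩⟩ := Set.mem_toFinset.mp hs
    rw [bipartiteBelow, filter_filter, card_filter_compl_adj_of_induce_iso e]
    decide

end SimpleGraph

theorem stmt_6 {V : Type*} [Fintype V] (G : SimpleGraph V) [DecidableRel G.Adj]
    {n k : ℕ} (h : G.IsSRGWith n k 1 2) :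
    (∀ u v : V, u ≠ v → ¬ G.Adj u v →
      Set.ncard {s : Finset V | s.card = 4 ∧
        Nonempty (G.induce (↑s : Set V) ≃g SimpleGraph.cycleGraph 4) ∧
        u ∈ s ∧ v ∈ s} = 1) ∧
    4 * inducedCycleCount G 4 = n * (n - k - 1) := by
  classical
  have hcycles (u v : V) (huv : u ≠ v) (hna : ¬G.Adj u v) :=
    (congrArg Set.ncard (h.setOf_induce_iso_cycleGraph_four_mem_eq huv hna)).trans
      (Set.ncard_singleton _)
  refine ⟨hcycles, ?_⟩
  rw [SimpleGraph.four_mul_inducedCycleCount_eq hcycles, h.compl_is_regular.card_filter_adj,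
    h.card]
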